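/- arXiv:1909.11717 — 4 statements merged into one kernel-verified Lean document; each statement's English description precedes it below -/
import Mathlib

section
/- Define the physicists' Hermite polynomial of order n by H_n(x) := (−1)^n e^{x²} · (d^n/dx^n) e^{−x²}. Then for every n ∈ ℕ and every y ∈ ℝ, ∫_ℝ e^{−(x−y)²/2} e^{−x²/2} H_n(x) dx = √π · e^{−y²/4} · y^n. -/
open Real

/-- The physicists' Hermite polynomial `H n x = (-1)^n e^{x²} (d/dx)^n e^{-x²}`. -/
noncomputable def physHermite (n : ℕ) (x : ℝ) : ℝ :=
  (-1) ^ n * Real.exp (x ^ 2) * iteratedDeriv n (fun y => Real.exp (-y ^ 2)) x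

/-!
Since `e^{-(x-y)²/2} e^{-x²/2} H_n(x) = (-1)^n e^{-y²/2} e^{yx} (d/dx)^n e^{-x²}`, the integral is
`(-1)^n e^{-y²/2} ∫ e^{yx} (d/dx)^n e^{-x²} dx`. Each integration by parts moves one derivative
onto `e^{yx}` at the cost of a factor `-y`; all the integrands involved are integrable because
the derivatives of `e^{-x²}` are polynomials times `e^{-x²}`. What remains is
`(-y)^n ∫ e^{yx - x²} dx = (-y)^n √π e^{y²/4}`, by completing the square.
-/

open MeasureTheory Filter Asymptotics Polynomial Topology

lemma exp_quadratic_isLittleO_abs_rpow_cocompact {a : ℝ} (ha : a < 0) (b s : ℝ) :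
    (fun x : ℝ ↦ rexp (a * x ^ 2 + b * x)) =o[cocompact ℝ] (|·| ^ s) := by
  refine (cexp_neg_quadratic_isLittleO_abs_rpow_cocompact (a := a) (by simpa) b s).norm_left
    |>.congr_left fun x ↦ ?_
  rw [← Complex.norm_exp_ofReal]
  push_cast
  rfl

lemma tendsto_eval_mul_exp_quadratic_cocompact (p : ℝ[X]) {a : ℝ} (ha : a < 0) (b : ℝ) :
    Tendsto (fun x ↦ p.eval x * rexp (a * x ^ 2 + b * x)) (cocompact ℝ) (𝓝 0) := by
  induction p using Polynomial.induction_on' with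
  | add p q hp hq => simpa only [eval_add, add_mul, add_zero] using hp.add hq
  | monomial k c =>
    have h := (exp_quadratic_isLittleO_abs_rpow_cocompact ha b (-k)).tendsto_div_nhds_zero
    rw [tendsto_zero_iff_norm_tendsto_zero]
    simpa [rpow_neg (abs_nonneg _), mul_assoc, mul_comm] using h.const_mul |c|

lemma integrable_eval_mul_exp_quadratic (p : ℝ[X]) {a : ℝ} (ha : a < 0) (b : ℝ) :
    Integrable (fun x ↦ p.eval x * rexp (a * x ^ 2 + b * x)) := by
  have hdecay := tendsto_eval_mul_exp_quadratic_cocompact p (by linarith : a / 2 < 0) b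
  have hO : (fun x ↦ p.eval x * rexp (a * x ^ 2 + b * x)) =O[cocompact ℝ]
      fun x ↦ rexp (-(-a / 2) * x ^ 2) := by
    refine ((hdecay.isBigO_one ℝ).mul (isBigO_refl (fun x ↦ rexp (a / 2 * x ^ 2)) _)).congr
      (fun x ↦ ?_) (fun x ↦ ?_)
    · rw [mul_assoc, ← exp_add]
      ring_nf
    · simp only [one_mul, neg_div, neg_neg]
  exact (Continuous.locallyIntegrable (by fun_prop)).integrable_of_isBigO_cocompact hO
    ((integrable_exp_neg_mul_sq (by linarith)).integrableAtFilter _)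

lemma exists_iteratedDeriv_exp_neg_sq_eq (n : ℕ) :
    ∃ p : ℝ[X], iteratedDeriv n (fun x ↦ rexp (-x ^ 2)) = fun x ↦ p.eval x * rexp (-x ^ 2) := by
  induction n with
  | zero => exact ⟨1, by simp⟩
  | succ n ih =>
    obtain ⟨p, hp⟩ := ih
    refine ⟨derivative p - C 2 * X * p, funext fun x ↦ ?_⟩
    have hgauss : HasDerivAt (fun x ↦ rexp (-x ^ 2)) (rexp (-x ^ 2) * -(2 * x)) x := by
      simpa using ((hasDerivAt_pow 2 x).neg).exp
    rw [iteratedDeriv_succ, hp]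
    refine ((p.hasDerivAt x).mul hgauss).deriv.trans ?_
    simp only [eval_sub, eval_mul, eval_C, eval_X, derivative_eval]
    ring

lemma hasDerivAt_iteratedDeriv_exp_neg_sq (n : ℕ) (x : ℝ) :
    HasDerivAt (iteratedDeriv n fun x ↦ rexp (-x ^ 2))
      (iteratedDeriv (n + 1) (fun x ↦ rexp (-x ^ 2)) x) x := by
  rw [iteratedDeriv_succ]
  exact (ContDiff.differentiable_iteratedDeriv' n (by fun_prop) x).hasDerivAt

lemma integrable_exp_mul_iteratedDeriv_exp_neg_sq (n : ℕ) (y : ℝ) :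
    Integrable fun x ↦ rexp (y * x) * iteratedDeriv n (fun x ↦ rexp (-x ^ 2)) x := by
  obtain ⟨p, hp⟩ := exists_iteratedDeriv_exp_neg_sq_eq n
  refine (integrable_eval_mul_exp_quadratic p neg_one_lt_zero y).congr
    (Eventually.of_forall fun x ↦ ?_)
  simp only [hp]
  rw [mul_left_comm, ← exp_add]
  ring_nf

lemma integral_exp_mul_deriv {g g' : ℝ → ℝ} (y : ℝ) (hg : ∀ x, HasDerivAt g (g' x) x)
    (hint : Integrable fun x ↦ rexp (y * x) * g x)
    (hint' : Integrable fun x ↦ rexp (y * x) * g' x) :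
    ∫ x, rexp (y * x) * g' x = -y * ∫ x, rexp (y * x) * g x := by
  have hexp (x : ℝ) : HasDerivAt (fun x ↦ rexp (y * x)) (y * rexp (y * x)) x := by
    simpa [mul_comm] using ((hasDerivAt_id x).const_mul y).exp
  rw [integral_mul_deriv_eq_deriv_mul_of_integrable (fun x _ ↦ hexp x) (fun x _ ↦ hg x) hint'
    ?_ hint]
  · simp only [mul_assoc, integral_const_mul, neg_mul]
  · simpa only [Pi.mul_def, mul_assoc] using hint.const_mul y

lemma integral_exp_mul_exp_neg_sq (y : ℝ) :
    ∫ x, rexp (y * x) * rexp (-x ^ 2) = √π * rexp (y ^ 2 / 4) := by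
  have hsquare (x : ℝ) :
      rexp (y * x) * rexp (-x ^ 2) = rexp (y ^ 2 / 4) * rexp (-(x - y / 2) ^ 2) := by
    rw [← exp_add, ← exp_add]
    ring_nf
  simp_rw [hsquare, integral_const_mul]
  rw [integral_sub_right_eq_self (fun x ↦ rexp (-x ^ 2)), mul_comm]
  simpa using integral_gaussian 1

lemma integral_exp_mul_iteratedDeriv_exp_neg_sq (n : ℕ) (y : ℝ) :
    ∫ x, rexp (y * x) * iteratedDeriv n (fun x ↦ rexp (-x ^ 2)) x
      = (-y) ^ n * (√π * rexp (y ^ 2 / 4)) := by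
  induction n with
  | zero => simpa using integral_exp_mul_exp_neg_sq y
  | succ n ih =>
    rw [integral_exp_mul_deriv y (hasDerivAt_iteratedDeriv_exp_neg_sq n)
      (integrable_exp_mul_iteratedDeriv_exp_neg_sq n y)
      (integrable_exp_mul_iteratedDeriv_exp_neg_sq (n + 1) y), ih, pow_succ]
    ring

/-- `∫ e^{-(x-y)²/2} e^{-x²/2} H n x dx = √π e^{-y²/4} y^n`. -/
theorem integral_kernel_physHermite (n : ℕ) (y : ℝ) :
    ∫ x : ℝ, Real.exp (-(x - y) ^ 2 / 2) * Real.exp (-x ^ 2 / 2) * physHermite n x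
      = Real.sqrt π * Real.exp (-y ^ 2 / 4) * y ^ n := by
  have hintegrand (x : ℝ) : rexp (-(x - y) ^ 2 / 2) * rexp (-x ^ 2 / 2) * physHermite n x
      = ((-1) ^ n * rexp (-y ^ 2 / 2)) *
        (rexp (y * x) * iteratedDeriv n (fun x ↦ rexp (-x ^ 2)) x) := by
    have hexp : rexp (-(x - y) ^ 2 / 2) * rexp (-x ^ 2 / 2) * rexp (x ^ 2)
        = rexp (-y ^ 2 / 2) * rexp (y * x) := by
      simp only [← exp_add]
      ring_nf
    rw [physHermite]
    linear_combination ((-1) ^ n * iteratedDeriv n (fun x ↦ rexp (-x ^ 2)) x) * hexp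
  simp_rw [hintegrand, integral_const_mul, integral_exp_mul_iteratedDeriv_exp_neg_sq]
  have hexp : rexp (-y ^ 2 / 2) * rexp (y ^ 2 / 4) = rexp (-y ^ 2 / 4) := by
    rw [← exp_add]
    ring_nf
  have hsign : (-1) ^ n * (-y) ^ n = y ^ n := by
    rw [← mul_pow, neg_one_mul, neg_neg]
  rw [← hexp]
  linear_combination (√π * rexp (-y ^ 2 / 2) * rexp (y ^ 2 / 4)) * hsign
end

section
/- Define the physicists' Hermite polynomial H_n(x) := (−1)^n e^{x²} · (d^n/dx^n) e^{−x²} and the normalised Hermite polynomial H̄_n := (2^n n! √π)^{−1/2} H_n. Then for every n ∈ ℕ and every y ∈ ℝ, α_n(y) := ∫_ℝ e^{−(x−y)²/2 − x²/2} H̄_n(x) dx = π^{1/4} · (1/2)^{n/2} · (y^n / √(n!)) · e^{−y²/4}. -/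
open Real

/-- The normalised Hermite polynomial `H̄ n = (2^n n! √π)^{-1/2} H n`. -/
noncomputable def normHermite (n : ℕ) (x : ℝ) : ℝ :=
  (2 ^ n * n.factorial * Real.sqrt π : ℝ) ^ (-(1 : ℝ) / 2) * physHermite n x

open Polynomial MeasureTheory in
/-- Physicists' Hermite polynomials as actual polynomials. -/
noncomputable def physHermitePoly : ℕ → Polynomial ℝ
  | 0 => 1
  | n + 1 => 2 * Polynomial.X * physHermitePoly n - Polynomial.derivative (physHermitePoly n)

open Polynomial in
lemma iteratedDeriv_gaussian_eq (n : ℕ) (x : ℝ) :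
    iteratedDeriv n (fun y => Real.exp (-y ^ 2)) x
      = (-1 : ℝ) ^ n * ((physHermitePoly n).eval x * Real.exp (-x ^ 2)) := by
  induction n generalizing x with
  | zero => simp [physHermitePoly]
  | succ n ih =>
    have ih' : iteratedDeriv n (fun y => Real.exp (-y ^ 2))
        = fun x => (-1 : ℝ) ^ n * ((physHermitePoly n).eval x * Real.exp (-x ^ 2)) :=
      funext ih
    have hexp : HasDerivAt (fun x : ℝ => Real.exp (-x ^ 2))
        (Real.exp (-x ^ 2) * (-(2 * x))) x := by
      have h1 : HasDerivAt (fun x : ℝ => -x ^ 2) (-(2 * x)) x := by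
        exact (hasDerivAt_pow 2 x).neg.congr_deriv (by simp)
      exact h1.exp
    have hd : HasDerivAt
        (fun x : ℝ => (-1 : ℝ) ^ n * ((physHermitePoly n).eval x * Real.exp (-x ^ 2)))
        ((-1 : ℝ) ^ n * ((Polynomial.derivative (physHermitePoly n)).eval x * Real.exp (-x ^ 2)
          + (physHermitePoly n).eval x * (Real.exp (-x ^ 2) * (-(2 * x))))) x :=
      (((physHermitePoly n).hasDerivAt x).mul hexp).const_mul _
    rw [iteratedDeriv_succ, ih', hd.deriv]
    have : (physHermitePoly (n + 1)).eval x
        = 2 * x * (physHermitePoly n).eval x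
          - (Polynomial.derivative (physHermitePoly n)).eval x := by
      simp [physHermitePoly]
    rw [this]
    ring

lemma physHermite_eq_eval (n : ℕ) (x : ℝ) :
    physHermite n x = (physHermitePoly n).eval x := by
  rw [physHermite, iteratedDeriv_gaussian_eq]
  have h1 : Real.exp (x ^ 2) * Real.exp (-x ^ 2) = 1 := by
    rw [← Real.exp_add]; simp
  have h2 : ((-1 : ℝ) ^ n) * ((-1 : ℝ) ^ n) = 1 := by
    rw [← pow_add, ← two_mul, pow_mul]; norm_num
  calc (-1 : ℝ) ^ n * Real.exp (x ^ 2)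
        * ((-1 : ℝ) ^ n * ((physHermitePoly n).eval x * Real.exp (-x ^ 2)))
      = ((-1 : ℝ) ^ n * (-1 : ℝ) ^ n) * ((physHermitePoly n).eval x
          * (Real.exp (x ^ 2) * Real.exp (-x ^ 2))) := by ring
    _ = (physHermitePoly n).eval x := by rw [h1, h2]; ring

open Polynomial MeasureTheory in
lemma integrable_gauss_poly (a : ℝ) (q : Polynomial ℝ) :
    Integrable fun x : ℝ => Real.exp (-(x - a) ^ 2) * q.eval x := by
  have base : ∀ r : Polynomial ℝ, Integrable fun x : ℝ => Real.exp (-x ^ 2) * r.eval x := by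
    intro r
    have hk : ∀ k : ℕ, Integrable fun x : ℝ => x ^ k * Real.exp (-x ^ 2) := by
      intro k
      have h := integrable_rpow_mul_exp_neg_mul_sq (b := 1) one_pos (s := (k : ℝ))
        (lt_of_lt_of_le neg_one_lt_zero (Nat.cast_nonneg k))
      simpa [Real.rpow_natCast, neg_one_mul] using h
    have hfun : (fun x : ℝ => Real.exp (-x ^ 2) * r.eval x)
        = fun x => ∑ k ∈ Finset.range (r.natDegree + 1),
            r.coeff k * (x ^ k * Real.exp (-x ^ 2)) := by
      funext x
      rw [Polynomial.eval_eq_sum_range, Finset.mul_sum]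
      exact Finset.sum_congr rfl fun k _ => by ring
    rw [hfun]
    exact integrable_finset_sum _ fun k _ => (hk k).const_mul _
  have h : Integrable fun x : ℝ =>
      Real.exp (-(x - a) ^ 2) * ((q.comp (X + C a)).eval (x - a)) :=
    (base (q.comp (X + C a))).comp_sub_right a
  have heq : (fun x : ℝ => Real.exp (-(x - a) ^ 2) * ((q.comp (X + C a)).eval (x - a)))
      = fun x => Real.exp (-(x - a) ^ 2) * q.eval x := by
    funext x; simp [Polynomial.eval_comp]
  rwa [heq] at h

open Polynomial MeasureTheory in
lemma gauss_int (a : ℝ) : ∀ n : ℕ,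
    ∫ x : ℝ, Real.exp (-(x - a) ^ 2) * (physHermitePoly n).eval x
      = Real.sqrt π * (2 * a) ^ n := by
  intro n
  induction n with
  | zero =>
    have h0 : (∫ x : ℝ, Real.exp (-(x - a) ^ 2) * (physHermitePoly 0).eval x)
        = ∫ x : ℝ, Real.exp (-(x - a) ^ 2) := by
      congr 1; funext x; simp [physHermitePoly]
    rw [h0]
    have h1 : (∫ x : ℝ, Real.exp (-(x - a) ^ 2)) = ∫ x : ℝ, Real.exp (-x ^ 2) :=
      integral_sub_right_eq_self (fun x : ℝ => Real.exp (-x ^ 2)) a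
    have h2 : (∫ x : ℝ, Real.exp (-(1 : ℝ) * x ^ 2)) = Real.sqrt (π / 1) :=
      integral_gaussian 1
    simp only [neg_one_mul, div_one] at h2
    rw [h1, h2]; simp
  | succ n ih =>
    have hu : ∀ x : ℝ, HasDerivAt (fun x : ℝ => Real.exp (-(x - a) ^ 2))
        (-(2 * (x - a)) * Real.exp (-(x - a) ^ 2)) x := by
      intro x
      have h1 : HasDerivAt (fun x : ℝ => -(x - a) ^ 2) (-(2 * (x - a))) x := by
        exact (((hasDerivAt_id x).sub_const a).pow 2).neg.congr_deriv (by simp)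
      simpa [mul_comm] using h1.exp
    have hv : ∀ x : ℝ, HasDerivAt (fun x : ℝ => (physHermitePoly n).eval x)
        ((Polynomial.derivative (physHermitePoly n)).eval x) x :=
      fun x => (physHermitePoly n).hasDerivAt x
    have huv' : Integrable ((fun x : ℝ => Real.exp (-(x - a) ^ 2))
        * fun x => (Polynomial.derivative (physHermitePoly n)).eval x) :=
      integrable_gauss_poly a (Polynomial.derivative (physHermitePoly n))
    have hu'v : Integrable ((fun x : ℝ => -(2 * (x - a)) * Real.exp (-(x - a) ^ 2))
        * fun x => (physHermitePoly n).eval x) := by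
      have h := integrable_gauss_poly a ((-2 : Polynomial ℝ) * (X - C a) * physHermitePoly n)
      have heq : (fun x : ℝ => Real.exp (-(x - a) ^ 2)
            * (((-2 : Polynomial ℝ) * (X - C a) * physHermitePoly n).eval x))
          = ((fun x : ℝ => -(2 * (x - a)) * Real.exp (-(x - a) ^ 2))
            * fun x => (physHermitePoly n).eval x) := by
        funext x; simp; ring
      rwa [heq] at h
    have huv : Integrable ((fun x : ℝ => Real.exp (-(x - a) ^ 2))
        * fun x => (physHermitePoly n).eval x) :=
      integrable_gauss_poly a (physHermitePoly n)
    have hparts := integral_mul_deriv_eq_deriv_mul_of_integrable (fun x _ => hu x) (fun x _ => hv x) huv' hu'v huv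
    calc ∫ x : ℝ, Real.exp (-(x - a) ^ 2) * (physHermitePoly (n + 1)).eval x
        = (∫ x : ℝ, Real.exp (-(x - a) ^ 2) * ((2 * X * physHermitePoly n).eval x))
          - ∫ x : ℝ, Real.exp (-(x - a) ^ 2)
              * (Polynomial.derivative (physHermitePoly n)).eval x := by
          rw [← integral_sub (integrable_gauss_poly a _) (integrable_gauss_poly a _)]
          congr 1; funext x; simp [physHermitePoly]; ring
      _ = (∫ x : ℝ, Real.exp (-(x - a) ^ 2) * ((2 * X * physHermitePoly n).eval x))
          + ∫ x : ℝ, -(2 * (x - a)) * Real.exp (-(x - a) ^ 2)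
              * (physHermitePoly n).eval x := by
          rw [hparts]; ring
      _ = ∫ x : ℝ, Real.exp (-(x - a) ^ 2) * ((C (2 * a) * physHermitePoly n).eval x) := by
          rw [← integral_add (integrable_gauss_poly a _) (by exact hu'v)]
          congr 1; funext x; simp; ring
      _ = 2 * a * ∫ x : ℝ, Real.exp (-(x - a) ^ 2) * (physHermitePoly n).eval x := by
          have heq : (fun x : ℝ => Real.exp (-(x - a) ^ 2)
                * ((C (2 * a) * physHermitePoly n).eval x))
              = fun x => 2 * a * (Real.exp (-(x - a) ^ 2) * (physHermitePoly n).eval x) := by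
            funext x; simp; ring
          rw [heq, MeasureTheory.integral_const_mul]
      _ = Real.sqrt π * (2 * a) ^ (n + 1) := by rw [ih]; ring

lemma const_eq (n : ℕ) :
    ((2 : ℝ) ^ n * n.factorial * Real.sqrt π) ^ (-(1 : ℝ) / 2) * Real.sqrt π
      = π ^ ((1 : ℝ) / 4) * (1 / 2 : ℝ) ^ ((n : ℝ) / 2) / Real.sqrt n.factorial := by
  have hπ : (0 : ℝ) < π := pi_pos
  have hfac : (0 : ℝ) < (n.factorial : ℝ) := by positivity
  have hsπ : (0 : ℝ) < Real.sqrt π := Real.sqrt_pos.mpr hπ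
  have hA : (0 : ℝ) < (2 : ℝ) ^ n * n.factorial * Real.sqrt π := by positivity
  have hL : (0 : ℝ) < ((2 : ℝ) ^ n * n.factorial * Real.sqrt π) ^ (-(1 : ℝ) / 2)
      * Real.sqrt π := by positivity
  have hR : (0 : ℝ) < π ^ ((1 : ℝ) / 4) * (1 / 2 : ℝ) ^ ((n : ℝ) / 2)
      / Real.sqrt n.factorial := by
    have : (0 : ℝ) < Real.sqrt n.factorial := Real.sqrt_pos.mpr hfac
    positivity
  rw [← Real.exp_log hL, ← Real.exp_log hR]
  congr 1
  have hhalf : Real.log (1 / 2 : ℝ) = -Real.log 2 := by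
    rw [one_div, Real.log_inv]
  rw [Real.log_mul (Real.rpow_pos_of_pos hA _).ne' hsπ.ne', Real.log_rpow hA,
    Real.log_mul (by positivity) hsπ.ne', Real.log_mul (by positivity) hfac.ne',
    Real.log_pow, Real.log_sqrt hπ.le,
    Real.log_div (by positivity) (Real.sqrt_pos.mpr hfac).ne',
    Real.log_mul (by positivity) (by positivity),
    Real.log_rpow hπ, Real.log_rpow (by norm_num : (0:ℝ) < 1/2),
    Real.log_sqrt hfac.le, hhalf]
  ring

/-- Closed form of the projected drift coefficient:
`α n y = ∫ e^{-(x-y)²/2 - x²/2} H̄ n x dx = π^{1/4} (1/2)^{n/2} y^n / √(n!) · e^{-y²/4}`. -/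
theorem projected_drift_coefficient_closed_form (n : ℕ) (y : ℝ) :
    ∫ x : ℝ, Real.exp (-(x - y) ^ 2 / 2 - x ^ 2 / 2) * normHermite n x
      = π ^ ((1 : ℝ) / 4) * (1 / 2 : ℝ) ^ ((n : ℝ) / 2)
        * (y ^ n / Real.sqrt n.factorial) * Real.exp (-y ^ 2 / 4) := by
  set c : ℝ := (2 ^ n * n.factorial * Real.sqrt π : ℝ) ^ (-(1 : ℝ) / 2) with hc
  have hintegrand : (fun x : ℝ => Real.exp (-(x - y) ^ 2 / 2 - x ^ 2 / 2) * normHermite n x)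
      = fun x => (c * Real.exp (-y ^ 2 / 4))
          * (Real.exp (-(x - y / 2) ^ 2) * (physHermitePoly n).eval x) := by
    funext x
    rw [normHermite, physHermite_eq_eval, ← hc]
    have hexp : Real.exp (-(x - y) ^ 2 / 2 - x ^ 2 / 2)
        = Real.exp (-y ^ 2 / 4) * Real.exp (-(x - y / 2) ^ 2) := by
      rw [← Real.exp_add]; congr 1; ring
    rw [hexp]; ring
  rw [hintegrand, MeasureTheory.integral_const_mul, gauss_int (y / 2) n]
  have h2 : (2 * (y / 2)) = y := by ring
  rw [h2]
  have := const_eq n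
  calc c * Real.exp (-y ^ 2 / 4) * (Real.sqrt π * y ^ n)
      = (c * Real.sqrt π) * y ^ n * Real.exp (-y ^ 2 / 4) := by ring
    _ = (π ^ ((1 : ℝ) / 4) * (1 / 2 : ℝ) ^ ((n : ℝ) / 2) / Real.sqrt n.factorial)
        * y ^ n * Real.exp (-y ^ 2 / 4) := by rw [hc, this]
    _ = π ^ ((1 : ℝ) / 4) * (1 / 2 : ℝ) ^ ((n : ℝ) / 2)
        * (y ^ n / Real.sqrt n.factorial) * Real.exp (-y ^ 2 / 4) := by ring
end

section
/- For every real γ > 0 there exists a constant C > 0 such that for every real ε with 0 < ε < e^{−1} there exist a natural number K ≥ 1, a natural number N ≥ 1, and a real h with 0 < h ≤ 1 satisfying exp(−2γK) + h² + 1/N ≤ ε² and N · K · h^{−1} ≤ C · ε^{−3} · log(1/ε). -/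
open Real

/-!
Split the error budget `ε²` into three equal parts `t = ε²/3`: take `h = ε/2`, `N = ⌈t⁻¹⌉` and
`K = ⌈log t⁻¹ / (2γ)⌉`. Then `N ≲ ε⁻²`, `h⁻¹ ≲ ε⁻¹`, and, since `log (1/ε) ≥ 1` for
`ε < e⁻¹`, also `K ≲ log t⁻¹ + 1 ≲ log (1/ε)`.
-/

lemma exp_neg_mul_natCeil_log_inv_div_le {a t : ℝ} (ha : 0 < a) (ht : 0 < t) :
    exp (-a * ⌈log t⁻¹ / a⌉₊) ≤ t := by
  have hK : log t⁻¹ ≤ a * ⌈log t⁻¹ / a⌉₊ := by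
    rw [← div_le_iff₀' ha]
    exact Nat.le_ceil _
  calc exp (-a * ⌈log t⁻¹ / a⌉₊) ≤ exp (-log t⁻¹) := exp_le_exp.mpr (by linarith)
    _ = t := by rw [log_inv, neg_neg, exp_log ht]

lemma one_div_natCeil_inv_le {t : ℝ} (ht : 0 < t) : 1 / (⌈t⁻¹⌉₊ : ℝ) ≤ t := by
  rw [div_le_iff₀ (by positivity), ← inv_mul_le_iff₀ ht, mul_one]
  exact Nat.le_ceil _

lemma exp_neg_mul_natCeil_add_sq_add_one_div_natCeil_le {a t h : ℝ} (ha : 0 < a) (ht : 0 < t)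
    (hh : h ^ 2 ≤ t) : exp (-a * ⌈log t⁻¹ / a⌉₊) + h ^ 2 + 1 / (⌈t⁻¹⌉₊ : ℝ) ≤ 3 * t := by
  linarith [exp_neg_mul_natCeil_log_inv_div_le ha ht, one_div_natCeil_inv_le ht]

lemma natCeil_le_add_one_mul {x c L : ℝ} (hx : 0 ≤ x) (hL : 1 ≤ L) (h : x ≤ c * L) :
    (⌈x⌉₊ : ℝ) ≤ (c + 1) * L := by
  linarith [Nat.ceil_lt_add_one hx]

lemma one_lt_log_one_div {ε : ℝ} (hε : 0 < ε) (hεe : ε < exp (-1)) : 1 < log (1 / ε) := by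
  have := log_lt_log hε hεe
  rw [log_exp] at this
  rw [one_div, log_inv]
  linarith

lemma natCeil_log_inv_div_le_mul_log_one_div {γ ε : ℝ} (hγ : 0 < γ) (hε : 0 < ε)
    (hεe : ε < exp (-1)) :
    (⌈log (ε ^ 2 / 3)⁻¹ / (2 * γ)⌉₊ : ℝ) ≤ ((log 3 + 2) / (2 * γ) + 1) * log (1 / ε) := by
  have hL := one_lt_log_one_div hε hεe
  have hlog : log (ε ^ 2 / 3)⁻¹ = log 3 + 2 * log (1 / ε) := by
    rw [inv_div, log_div (by norm_num) (by positivity), log_pow, one_div, log_inv]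
    push_cast
    ring
  have hlog3 : 0 ≤ log 3 := log_nonneg (by norm_num)
  refine natCeil_le_add_one_mul (by rw [hlog]; positivity) hL.le ?_
  rw [hlog, div_mul_eq_mul_div]
  gcongr
  nlinarith

lemma natCeil_inv_sq_div_three_le {ε : ℝ} (hε : 0 < ε) (hε1 : ε < 1) :
    (⌈(ε ^ 2 / 3)⁻¹⌉₊ : ℝ) ≤ 6 * ε⁻¹ ^ 2 := by
  have h3 : 3 ≤ (ε ^ 2 / 3)⁻¹ := by
    rw [inv_div, le_div_iff₀ (by positivity)]
    nlinarith
  refine (Nat.ceil_le_two_mul (by linarith)).trans (le_of_eq ?_)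
  field_simp
  ring

/-- Complexity of the projected particle method: the parameters `K` (truncation
level), `N` (number of particles) and `h` (time step) can be chosen so that the
MSE bound `exp(-2γK) + h² + 1/N` is at most `ε²` while the computational cost
`N·K·h⁻¹` is of order `ε⁻³ log(1/ε)`. -/
theorem projected_particle_complexity (γ : ℝ) (hγ : 0 < γ) :
    ∃ C : ℝ, 0 < C ∧ ∀ ε : ℝ, 0 < ε → ε < Real.exp (-1) →
      ∃ (K N : ℕ) (h : ℝ), 1 ≤ K ∧ 1 ≤ N ∧ 0 < h ∧ h ≤ 1 ∧
        Real.exp (-2 * γ * K) + h ^ 2 + 1 / N ≤ ε ^ 2 ∧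
        (N : ℝ) * K * h⁻¹ ≤ C * ε⁻¹ ^ 3 * Real.log (1 / ε) := by
  set c := (log 3 + 2) / (2 * γ) + 1
  have hc : 0 < c := by positivity [log_nonneg (show (1 : ℝ) ≤ 3 by norm_num)]
  refine ⟨12 * c, by positivity, fun ε hε hεe => ?_⟩
  have hε1 : ε < 1 := hεe.trans (exp_lt_one_iff.mpr (by norm_num))
  have hK := natCeil_log_inv_div_le_mul_log_one_div hγ hε hεe
  have hN := natCeil_inv_sq_div_three_le hε hε1
  have hh : (ε / 2)⁻¹ = 2 * ε⁻¹ := by rw [inv_div, div_eq_mul_inv]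
  have ht_inv : 1 < (ε ^ 2 / 3)⁻¹ := (one_lt_inv₀ (by positivity)).mpr (by nlinarith)
  refine ⟨⌈log (ε ^ 2 / 3)⁻¹ / (2 * γ)⌉₊, ⌈(ε ^ 2 / 3)⁻¹⌉₊, ε / 2,
    Nat.one_le_ceil_iff.mpr (by positivity [log_pos ht_inv]),
    Nat.one_le_ceil_iff.mpr (by positivity), by positivity, by linarith, ?_, ?_⟩
  · have := exp_neg_mul_natCeil_add_sq_add_one_div_natCeil_le (by positivity : 0 < 2 * γ)
      (by positivity : 0 < ε ^ 2 / 3) (h := ε / 2) (by nlinarith)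
    rw [show -2 * γ = -(2 * γ) by ring]
    linarith
  · calc (⌈(ε ^ 2 / 3)⁻¹⌉₊ : ℝ) * ⌈log (ε ^ 2 / 3)⁻¹ / (2 * γ)⌉₊ * (ε / 2)⁻¹
        ≤ 6 * ε⁻¹ ^ 2 * (c * log (1 / ε)) * (2 * ε⁻¹) := by
          rw [hh]
          gcongr
      _ = 12 * c * ε⁻¹ ^ 3 * log (1 / ε) := by ring
end

section
/- For every real γ > 0 there exists a constant C > 0 such that for every real ε with 0 < ε < e^{−1} there exist natural numbers M ≥ 1, K ≥ 1, L, and a function N : ℕ → ℕ with N_ℓ ≥ 1 for all ℓ, satisfying exp(−2γK) + 4^{−L} + ∑_{ℓ=0}^{L} 2^{−ℓ}/N_ℓ + 1/M! ≤ ε² and M · K · ∑_{ℓ=0}^{L} 2^{ℓ} · N_ℓ ≤ C · ε^{−2} · (log(1/ε))⁴. -/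
open Real

lemma aux_two_pow_le_factorial_succ (n : ℕ) : 2 ^ n ≤ (n + 1).factorial := by
  induction n with
  | zero => simp [Nat.factorial]
  | succ n ih =>
    rw [pow_succ, Nat.factorial_succ]
    calc 2 ^ n * 2 ≤ (n + 1).factorial * 2 := Nat.mul_le_mul_right _ ih
      _ = 2 * (n + 1).factorial := Nat.mul_comm _ _
      _ ≤ (n + 1 + 1) * (n + 1).factorial := Nat.mul_le_mul_right _ (by omega)

set_option maxHeartbeats 1000000 in
/-- Complexity of the iterative MLMC method with projected coefficients: the number
of Picard steps `M`, the truncation level `K`, the finest level `L` (time step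
`2^{-L}`) and the numbers of samples `N ℓ` per level can be chosen so that the MSE
bound `exp(-2γK) + 4^{-L} + ∑_{ℓ≤L} 2^{-ℓ}/N_ℓ + 1/M!` is at most `ε²` while the
cost `M·K·∑_{ℓ≤L} 2^ℓ N_ℓ` is of order `ε⁻² (log(1/ε))⁴`. -/
theorem iterative_mlmc_projected_complexity (γ : ℝ) (hγ : 0 < γ) :
    ∃ C : ℝ, 0 < C ∧ ∀ ε : ℝ, 0 < ε → ε < Real.exp (-1) →
      ∃ (M K L : ℕ) (N : ℕ → ℕ), 1 ≤ M ∧ 1 ≤ K ∧ (∀ ℓ, 1 ≤ N ℓ) ∧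
        Real.exp (-2 * γ * K) + ((4 : ℝ) ^ L)⁻¹
            + (∑ ℓ ∈ Finset.range (L + 1), ((2 : ℝ) ^ ℓ)⁻¹ / N ℓ)
            + 1 / M.factorial ≤ ε ^ 2 ∧
        (M : ℝ) * K * (∑ ℓ ∈ Finset.range (L + 1), (2 : ℝ) ^ ℓ * N ℓ)
          ≤ C * ε⁻¹ ^ 2 * Real.log (1 / ε) ^ 4 := by
  refine ⟨2050 * (2 / γ + 2), by positivity, ?_⟩
  intro ε hε hεe
  set t : ℝ := Real.log (1 / ε) with ht_def
  have hlogε : Real.log ε < -1 := by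
    have h := Real.log_lt_log hε hεe
    rwa [Real.log_exp] at h
  have ht1 : 1 < t := by
    rw [ht_def, one_div, Real.log_inv]; linarith
  have ht0 : 0 < t := by linarith
  have hεt : ε = Real.exp (-t) := by
    rw [ht_def, one_div, Real.log_inv, neg_neg, Real.exp_log hε]
  have hε2 : ε ^ 2 = Real.exp (-(2 * t)) := by
    rw [hεt, sq, ← Real.exp_add]; ring_nf
  have hε2' : (ε ^ 2)⁻¹ = Real.exp (2 * t) := by
    rw [hε2, ← Real.exp_neg, neg_neg]
  have hlog2pos : (0 : ℝ) < Real.log 2 := Real.log_pos (by norm_num)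
  have hl2a : (0.6931471803 : ℝ) < Real.log 2 := Real.log_two_gt_d9
  have hl2b : Real.log 2 < 0.6931471808 := Real.log_two_lt_d9
  have he1a : (2.7182818283 : ℝ) < Real.exp 1 := Real.exp_one_gt_d9
  have he1b : Real.exp 1 < 2.7182818286 := Real.exp_one_lt_d9
  have hexp2 : Real.exp 2 = Real.exp 1 * Real.exp 1 := by
    rw [← Real.exp_add]; norm_num
  have hexp2ge : (4 : ℝ) ≤ Real.exp 2 := by nlinarith
  have hexp3 : Real.exp 3 = Real.exp 1 * Real.exp 1 * Real.exp 1 := by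
    rw [← Real.exp_add, ← Real.exp_add]; norm_num
  have hexp3le : Real.exp 3 ≤ 21 := by nlinarith
  have hpow2exp : ∀ n : ℕ, ((2 : ℝ)) ^ n = Real.exp (n * Real.log 2) := by
    intro n
    rw [Real.exp_nat_mul, Real.exp_log (by norm_num : (0:ℝ) < 2)]
  set Lc : ℕ := ⌈t / Real.log 2⌉₊ + 1 with hLc_def
  set Kc : ℕ := ⌈(t + 1) / γ⌉₊ + 1 with hKc_def
  set Mc : ℕ := ⌈(2 * t + 2) / Real.log 2⌉₊ + 1 with hMc_def
  set Nf : ℕ → ℕ := fun ℓ => ⌈(4 * ((Lc : ℝ) + 1)) / ((2 : ℝ) ^ ℓ * ε ^ 2)⌉₊ + 1 with hNf_def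
  have hLcast : (Lc : ℝ) = (⌈t / Real.log 2⌉₊ : ℝ) + 1 := by
    rw [hLc_def]; push_cast; ring
  have hKcast : (Kc : ℝ) = (⌈(t + 1) / γ⌉₊ : ℝ) + 1 := by
    rw [hKc_def]; push_cast; ring
  have hMcast : (Mc : ℝ) = (⌈(2 * t + 2) / Real.log 2⌉₊ : ℝ) + 1 := by
    rw [hMc_def]; push_cast; ring
  have hLge : t / Real.log 2 + 1 ≤ (Lc : ℝ) := by
    have := Nat.le_ceil (t / Real.log 2)
    rw [hLcast]; linarith
  have hLle : (Lc : ℝ) ≤ t / Real.log 2 + 2 := by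
    have := Nat.ceil_lt_add_one (show (0:ℝ) ≤ t / Real.log 2 by positivity)
    rw [hLcast]; linarith
  have hdivle : t / Real.log 2 ≤ 2 * t := by
    rw [div_le_iff₀ hlog2pos]; nlinarith
  have hL5t : (Lc : ℝ) + 1 ≤ 5 * t := by nlinarith
  have hLpos : (0 : ℝ) < (Lc : ℝ) + 1 := by positivity
  -- Term 1 : exp
  have hT1 : Real.exp (-2 * γ * Kc) ≤ ε ^ 2 / 4 := by
    have h1 : t + 1 ≤ γ * Kc := by
      have h := Nat.le_ceil ((t + 1) / γ)
      have h2 : (t + 1) / γ ≤ (Kc : ℝ) := by rw [hKcast]; linarith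
      calc t + 1 = γ * ((t + 1) / γ) := by field_simp
        _ ≤ γ * Kc := mul_le_mul_of_nonneg_left h2 hγ.le
    calc Real.exp (-2 * γ * Kc) ≤ Real.exp (-(2 * t) - 2) :=
          Real.exp_le_exp.mpr (by nlinarith [h1])
      _ = Real.exp (-(2 * t)) / Real.exp 2 := by rw [Real.exp_sub]
      _ ≤ Real.exp (-(2 * t)) / 4 :=
          div_le_div_of_nonneg_left (Real.exp_pos _).le (by norm_num) hexp2ge
      _ = ε ^ 2 / 4 := by rw [hε2]
  -- Term 2 : 4^{-L}
  have hlog4 : Real.log 4 = 2 * Real.log 2 := by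
    rw [show (4 : ℝ) = 2 ^ 2 by norm_num, Real.log_pow]; push_cast; ring
  have hT2 : ((4 : ℝ) ^ Lc)⁻¹ ≤ ε ^ 2 / 4 := by
    have h4L : ((4 : ℝ) ^ Lc)⁻¹ = Real.exp (-((Lc : ℝ) * Real.log 4)) := by
      rw [Real.exp_neg, Real.exp_nat_mul, Real.exp_log (by norm_num : (0:ℝ) < 4)]
    have hcancel : t / Real.log 2 * Real.log 2 = t := div_mul_cancel₀ t hlog2pos.ne'
    have hkey : 2 * t + Real.log 4 ≤ (Lc : ℝ) * Real.log 4 := by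
      have : ((Lc : ℝ)) * Real.log 4 = 2 * ((Lc : ℝ) * Real.log 2) := by rw [hlog4]; ring
      rw [this, hlog4]
      nlinarith [mul_le_mul_of_nonneg_right hLge hlog2pos.le]
    rw [h4L]
    calc Real.exp (-((Lc : ℝ) * Real.log 4)) ≤ Real.exp (-(2 * t) - Real.log 4) :=
          Real.exp_le_exp.mpr (by linarith)
      _ = Real.exp (-(2 * t)) / Real.exp (Real.log 4) := by rw [Real.exp_sub]
      _ = ε ^ 2 / 4 := by rw [hε2, Real.exp_log (by norm_num : (0:ℝ) < 4)]
  -- Term 3 : sum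
  have hNge : ∀ ℓ : ℕ, 4 * ((Lc : ℝ) + 1) / ((2 : ℝ) ^ ℓ * ε ^ 2) ≤ (Nf ℓ : ℝ) := by
    intro ℓ
    have h := Nat.le_ceil (4 * ((Lc : ℝ) + 1) / ((2 : ℝ) ^ ℓ * ε ^ 2))
    have : (Nf ℓ : ℝ) = (⌈(4 * ((Lc : ℝ) + 1)) / ((2 : ℝ) ^ ℓ * ε ^ 2)⌉₊ : ℝ) + 1 := by
      rw [hNf_def]; push_cast; ring
    rw [this]; linarith
  have hNpos : ∀ ℓ : ℕ, (0 : ℝ) < (Nf ℓ : ℝ) := by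
    intro ℓ
    have : 0 < Nf ℓ := Nat.succ_pos _
    exact_mod_cast this
  have hT3 : (∑ ℓ ∈ Finset.range (Lc + 1), ((2 : ℝ) ^ ℓ)⁻¹ / (Nf ℓ)) ≤ ε ^ 2 / 4 := by
    have hterm : ∀ ℓ ∈ Finset.range (Lc + 1),
        ((2 : ℝ) ^ ℓ)⁻¹ / (Nf ℓ) ≤ ε ^ 2 / (4 * ((Lc : ℝ) + 1)) := by
      intro ℓ _
      have hP : (0 : ℝ) < (2 : ℝ) ^ ℓ := by positivity
      have key : 4 * ((Lc : ℝ) + 1) / ε ^ 2 ≤ (2 : ℝ) ^ ℓ * Nf ℓ := by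
        have hmul : 4 * ((Lc : ℝ) + 1) ≤ (Nf ℓ : ℝ) * ((2 : ℝ) ^ ℓ * ε ^ 2) :=
          (div_le_iff₀ (by positivity)).mp (hNge ℓ)
        rw [div_le_iff₀ (by positivity : (0:ℝ) < ε ^ 2)]
        nlinarith
      have e1 : ((2 : ℝ) ^ ℓ)⁻¹ / (Nf ℓ : ℝ) = ((2 : ℝ) ^ ℓ * Nf ℓ)⁻¹ := by
        rw [mul_inv, div_eq_mul_inv]
      rw [e1]
      have h2 : (0 : ℝ) < 4 * ((Lc : ℝ) + 1) / ε ^ 2 := by positivity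
      calc ((2 : ℝ) ^ ℓ * Nf ℓ)⁻¹ ≤ (4 * ((Lc : ℝ) + 1) / ε ^ 2)⁻¹ :=
            inv_anti₀ h2 key
        _ = ε ^ 2 / (4 * ((Lc : ℝ) + 1)) := by rw [inv_div]
    calc (∑ ℓ ∈ Finset.range (Lc + 1), ((2 : ℝ) ^ ℓ)⁻¹ / (Nf ℓ))
        ≤ ∑ ℓ ∈ Finset.range (Lc + 1), ε ^ 2 / (4 * ((Lc : ℝ) + 1)) :=
          Finset.sum_le_sum hterm
      _ = ((Lc : ℝ) + 1) * (ε ^ 2 / (4 * ((Lc : ℝ) + 1))) := by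
          rw [Finset.sum_const, Finset.card_range, nsmul_eq_mul]; push_cast; ring
      _ = ε ^ 2 / 4 := by field_simp
  -- Term 4 : factorial
  have hT4 : 1 / ((Mc.factorial : ℝ)) ≤ ε ^ 2 / 4 := by
    have hfacN : 2 ^ (⌈(2 * t + 2) / Real.log 2⌉₊) ≤ Mc.factorial := by
      rw [hMc_def]; exact aux_two_pow_le_factorial_succ _
    have hfacR : ((2 : ℝ)) ^ (⌈(2 * t + 2) / Real.log 2⌉₊) ≤ (Mc.factorial : ℝ) := by
      exact_mod_cast hfacN
    have hcge : (2 * t + 2) / Real.log 2 ≤ (⌈(2 * t + 2) / Real.log 2⌉₊ : ℝ) :=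
      Nat.le_ceil _
    have hpow : Real.exp (2 * t + 2) ≤ (2 : ℝ) ^ (⌈(2 * t + 2) / Real.log 2⌉₊) := by
      rw [hpow2exp]
      apply Real.exp_le_exp.mpr
      have := mul_le_mul_of_nonneg_right hcge hlog2pos.le
      rw [div_mul_cancel₀ _ hlog2pos.ne'] at this
      linarith
    have hbig : 4 / ε ^ 2 ≤ (Mc.factorial : ℝ) := by
      have : 4 / ε ^ 2 ≤ Real.exp (2 * t + 2) := by
        rw [div_le_iff₀ (by positivity : (0:ℝ) < ε ^ 2), hε2,
          ← Real.exp_add]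
        have : Real.exp (2 * t + 2 + -(2 * t)) = Real.exp 2 := by ring_nf
        rw [this]; exact hexp2ge
      linarith
    have h4ε : (0 : ℝ) < 4 / ε ^ 2 := by positivity
    calc 1 / ((Mc.factorial : ℝ)) ≤ 1 / (4 / ε ^ 2) :=
          one_div_le_one_div_of_le h4ε hbig
      _ = ε ^ 2 / 4 := by rw [one_div_div]
  -- Cost bounds
  have hMle : (Mc : ℝ) ≤ 10 * t := by
    have hcb := Nat.ceil_lt_add_one (show (0:ℝ) ≤ (2 * t + 2) / Real.log 2 by positivity)
    have hdiv : (2 * t + 2) / Real.log 2 ≤ 2 * (2 * t + 2) := by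
      rw [div_le_iff₀ hlog2pos]; nlinarith
    rw [hMcast]; linarith
  have hKle : (Kc : ℝ) ≤ (2 / γ + 2) * t := by
    have hcb := Nat.ceil_lt_add_one (show (0:ℝ) ≤ (t + 1) / γ by positivity)
    have hdiv : (t + 1) / γ ≤ 2 * t / γ := by
      apply div_le_div_of_nonneg_right ?_ hγ.le
      · linarith
    have : (2 / γ + 2) * t = 2 * t / γ + 2 * t := by ring
    rw [hKcast, this]; linarith
  have hSle : (∑ ℓ ∈ Finset.range (Lc + 1), (2 : ℝ) ^ ℓ * Nf ℓ) ≤ 205 * t ^ 2 / ε ^ 2 := by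
    have h2L : (2 : ℝ) ^ (Lc + 1) ≤ 21 * t / ε ^ 2 := by
      have hexp : (2 : ℝ) ^ (Lc + 1) = Real.exp (((Lc : ℝ) + 1) * Real.log 2) := by
        rw [hpow2exp]; push_cast; ring_nf
      have harg : ((Lc : ℝ) + 1) * Real.log 2 ≤ t + 3 := by
        have h1 : (Lc : ℝ) + 1 ≤ t / Real.log 2 + 3 := by linarith
        have := mul_le_mul_of_nonneg_right h1 hlog2pos.le
        rw [add_mul, add_mul, div_mul_cancel₀ _ hlog2pos.ne'] at this
        linarith
      rw [hexp]
      calc Real.exp (((Lc : ℝ) + 1) * Real.log 2) ≤ Real.exp (t + 3) :=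
            Real.exp_le_exp.mpr harg
        _ = Real.exp t * Real.exp 3 := Real.exp_add _ _
        _ ≤ Real.exp (2 * t) * 21 := by
            apply mul_le_mul (Real.exp_le_exp.mpr (by linarith)) hexp3le
              (Real.exp_pos _).le (Real.exp_pos _).le
        _ = 21 * (ε ^ 2)⁻¹ := by rw [hε2']; ring
        _ ≤ 21 * t / ε ^ 2 := by
            rw [mul_div_assoc, div_eq_mul_inv]
            have h0 : (0:ℝ) ≤ (ε ^ 2)⁻¹ := by positivity
            have h1 : 1 * (ε ^ 2)⁻¹ ≤ t * (ε ^ 2)⁻¹ :=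
              mul_le_mul_of_nonneg_right ht1.le h0
            linarith
    have hterm : ∀ ℓ ∈ Finset.range (Lc + 1),
        (2 : ℝ) ^ ℓ * Nf ℓ ≤ 41 * t / ε ^ 2 := by
      intro ℓ hℓ
      have hℓle : ℓ ≤ Lc := by
        simp only [Finset.mem_range] at hℓ; omega
      have hP : (0 : ℝ) < (2 : ℝ) ^ ℓ := by positivity
      have hceil := Nat.ceil_lt_add_one
        (show (0:ℝ) ≤ 4 * ((Lc : ℝ) + 1) / ((2 : ℝ) ^ ℓ * ε ^ 2) by positivity)
      have hNle : (Nf ℓ : ℝ) ≤ 4 * ((Lc : ℝ) + 1) / ((2 : ℝ) ^ ℓ * ε ^ 2) + 2 := by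
        have : (Nf ℓ : ℝ) = (⌈(4 * ((Lc : ℝ) + 1)) / ((2 : ℝ) ^ ℓ * ε ^ 2)⌉₊ : ℝ) + 1 := by
          rw [hNf_def]; push_cast; ring
        rw [this]; linarith
      have hsplit : (2 : ℝ) ^ ℓ * (4 * ((Lc : ℝ) + 1) / ((2 : ℝ) ^ ℓ * ε ^ 2) + 2)
          = 4 * ((Lc : ℝ) + 1) / ε ^ 2 + 2 * (2 : ℝ) ^ ℓ := by
        field_simp
      have hpowle : (2 : ℝ) ^ ℓ ≤ (2 : ℝ) ^ Lc :=
        pow_le_pow_right₀ (by norm_num) hℓle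
      have hpow2 : 2 * (2 : ℝ) ^ ℓ ≤ (2 : ℝ) ^ (Lc + 1) := by
        rw [pow_succ]; linarith
      have hfirst : 4 * ((Lc : ℝ) + 1) / ε ^ 2 ≤ 20 * t / ε ^ 2 := by
        apply div_le_div_of_nonneg_right ?_ (by positivity)
        · linarith
      calc (2 : ℝ) ^ ℓ * Nf ℓ
          ≤ (2 : ℝ) ^ ℓ * (4 * ((Lc : ℝ) + 1) / ((2 : ℝ) ^ ℓ * ε ^ 2) + 2) :=
            mul_le_mul_of_nonneg_left hNle hP.le
        _ = 4 * ((Lc : ℝ) + 1) / ε ^ 2 + 2 * (2 : ℝ) ^ ℓ := hsplit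
        _ ≤ 20 * t / ε ^ 2 + 21 * t / ε ^ 2 := by
            have := h2L
            linarith [hpow2, hfirst]
        _ = 41 * t / ε ^ 2 := by ring
    calc (∑ ℓ ∈ Finset.range (Lc + 1), (2 : ℝ) ^ ℓ * Nf ℓ)
        ≤ ∑ ℓ ∈ Finset.range (Lc + 1), 41 * t / ε ^ 2 := Finset.sum_le_sum hterm
      _ = ((Lc : ℝ) + 1) * (41 * t / ε ^ 2) := by
          rw [Finset.sum_const, Finset.card_range, nsmul_eq_mul]; push_cast; ring
      _ ≤ 5 * t * (41 * t / ε ^ 2) := by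
          apply mul_le_mul_of_nonneg_right hL5t (by positivity)
      _ = 205 * t ^ 2 / ε ^ 2 := by ring
  refine ⟨Mc, Kc, Lc, Nf, Nat.le_add_left 1 _, Nat.le_add_left 1 _,
    fun ℓ => Nat.le_add_left 1 _, by linarith, ?_⟩
  have hSnonneg : (0 : ℝ) ≤ ∑ ℓ ∈ Finset.range (Lc + 1), (2 : ℝ) ^ ℓ * Nf ℓ := by
    apply Finset.sum_nonneg; intro ℓ _; positivity
  have hKnn : (0 : ℝ) ≤ (Kc : ℝ) := Nat.cast_nonneg _
  have hMnn : (0 : ℝ) ≤ (Mc : ℝ) := Nat.cast_nonneg _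
  calc (Mc : ℝ) * Kc * (∑ ℓ ∈ Finset.range (Lc + 1), (2 : ℝ) ^ ℓ * Nf ℓ)
      ≤ (10 * t) * ((2 / γ + 2) * t) * (205 * t ^ 2 / ε ^ 2) := by
        apply mul_le_mul (mul_le_mul hMle hKle hKnn (by positivity)) hSle hSnonneg
          (by positivity)
    _ = 2050 * (2 / γ + 2) * ε⁻¹ ^ 2 * t ^ 4 := by
        field_simp; ring
end
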